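/- arXiv:1302.5258 — 2 statements merged into one kernel-verified Lean document; each statement's English description precedes it below -/
import Mathlib

section
/- Let E be a Hilbert space with orthonormal basis indexed so that E = E¹ ⊕ E², where (w_m) is an orthonormal basis of E², and set X^m = E¹ ⊕ span{w₁,...,w_m}. Suppose E embeds compactly into a Banach space L (with norm ‖·‖_L). Define η_m = sup{‖u‖_L/‖u‖ : u ∈ (X^m)^⊥, u ≠ 0}. Then η_m is nonincreasing and η_m → 0 as m → ∞. -/
/-!
The quantity `η m` is the operator norm of `ι` restricted to `(X m)ᗮ`, which can only shrink as
`X m` grows. Choosing unit vectors `u m ∈ (X m)ᗮ` that nearly attain it, `⟪u m, v⟫ → 0` for every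
`v`, since this holds on the dense union of the `X m` and the functionals `⟪u m, ·⟫` are uniformly
bounded. A compact operator sends such a weakly null bounded sequence to a norm-null one, so
`‖ι (u m)‖ → 0`, and with it `η m → 0`.
-/

open Filter Topology

theorem monotone_sup_span_image_lt {R M ι : Type*} [Semiring R] [AddCommMonoid M] [Module R M]
    [Preorder ι] (N : Submodule R M) (w : ι → M) :
    Monotone fun m => N ⊔ Submodule.span R (w '' {i | i < m}) := fun _ _ hab =>
  sup_le_sup_left (Submodule.span_mono (Set.image_mono fun _ hi => lt_of_lt_of_le hi hab)) _

namespace ContinuousLinearMap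

variable {𝕜 E F : Type*} [RCLike 𝕜] [NormedAddCommGroup E] [NormedSpace 𝕜 E]
  [NormedAddCommGroup F] [NormedSpace 𝕜 F]

theorem sSup_image_norm_div_norm_eq_opNorm_comp_subtypeL (T : E →L[𝕜] F) (S : Submodule 𝕜 E) :
    sSup ((fun u : E => ‖T u‖ / ‖u‖) '' {u : E | u ∈ S ∧ u ≠ 0}) = ‖T.comp S.subtypeL‖ := by
  set ratios := (fun u : E => ‖T u‖ / ‖u‖) '' {u : E | u ∈ S ∧ u ≠ 0}
  have hle : ∀ r ∈ ratios, r ≤ ‖T.comp S.subtypeL‖ := by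
    rintro _ ⟨u, ⟨hu, hu0⟩, rfl⟩
    rw [div_le_iff₀ (norm_pos_iff.2 hu0)]
    exact (T.comp S.subtypeL).le_opNorm ⟨u, hu⟩
  refine le_antisymm (Real.sSup_le hle (norm_nonneg _)) (opNorm_le_bound _ ?_ fun x => ?_)
  · exact Real.sSup_nonneg (by rintro _ ⟨u, -, rfl⟩; positivity)
  · rcases eq_or_ne (x : E) 0 with hx | hx
    · simp [hx]
    · exact (div_le_iff₀ (norm_pos_iff.2 hx)).1 (le_csSup ⟨_, hle⟩ ⟨x, ⟨x.2, hx⟩, rfl⟩)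

theorem opNorm_comp_subtypeL_mono (T : E →L[𝕜] F) {S S' : Submodule 𝕜 E} (h : S ≤ S') :
    ‖T.comp S.subtypeL‖ ≤ ‖T.comp S'.subtypeL‖ :=
  opNorm_le_bound _ (norm_nonneg _) fun x => (T.comp S'.subtypeL).le_opNorm ⟨x, h x.2⟩

end ContinuousLinearMap

section WeakToNorm

variable {𝕜 E F : Type*} [RCLike 𝕜] [NormedAddCommGroup E] [NormedSpace 𝕜 E]
  [NormedAddCommGroup F] [NormedSpace 𝕜 F]

theorem IsCompactOperator.tendsto_zero_of_forall_dual {α : Type*} {l : Filter α}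
    {T : E →L[𝕜] F} (hT : IsCompactOperator T) {u : α → E} {C : ℝ} (hC : ∀ a, ‖u a‖ ≤ C)
    (hu : ∀ φ : StrongDual 𝕜 E, Tendsto (fun a => φ (u a)) l (𝓝 0)) :
    Tendsto (fun a => T (u a)) l (𝓝 0) := by
  obtain ⟨K, hK, hTK⟩ := hT.image_closedBall_subset_compact C
  refine hK.tendsto_nhds_of_unique_mapClusterPt
    (Eventually.of_forall fun a => hTK ⟨u a, mem_closedBall_zero_iff.2 (hC a), rfl⟩)
    fun y _ hy => SeparatingDual.eq_zero_of_forall_dual_eq_zero (R := 𝕜) fun ψ => ?_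
  have hψy : MapClusterPt (ψ y) l (fun a => ψ (T (u a))) :=
    hy.tendsto_comp (ψ.continuous.tendsto y)
  exact eq_of_nhds_neBot (hψy.clusterPt.mono (hu (ψ.comp T)))

end WeakToNorm

section Orthogonal

variable {𝕜 E : Type*} [RCLike 𝕜] [NormedAddCommGroup E] [InnerProductSpace 𝕜 E]

theorem tendsto_inner_zero_of_mem_orthogonal {X : ℕ → Submodule 𝕜 E} (hX : Monotone X)
    (hdense : Dense (⋃ m, (X m : Set E))) {u : ℕ → E} (hu : ∀ m, u m ∈ (X m)ᗮ) {C : ℝ}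
    (hC : ∀ m, ‖u m‖ ≤ C) (v : E) :
    Tendsto (fun m => inner 𝕜 (u m) v) atTop (𝓝 0) := by
  have hbound : ∃ C, ∀ m, ‖innerSL 𝕜 (u m)‖ ≤ C :=
    ⟨C, fun m => (innerSL_apply_norm 𝕜 (u m)).trans_le (hC m)⟩
  have hequi : Equicontinuous fun m => (innerSL 𝕜 (u m) : E → 𝕜) :=
    ((NormedSpace.equicontinuous_TFAE fun m => innerSL 𝕜 (u m)).out 5 1).1 hbound
  have hclosed := hequi.isClosed_setOfPred_tendsto (l := atTop) (continuous_const (y := (0 : 𝕜)))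
  have hunion : (⋃ m, (X m : Set E)) ⊆ {v | Tendsto (fun m => inner 𝕜 (u m) v) atTop (𝓝 0)} := by
    refine Set.iUnion_subset fun N v hv => tendsto_const_nhds.congr' ?_
    filter_upwards [eventually_ge_atTop N] with m hm
    exact (Submodule.inner_left_of_mem_orthogonal (hX hm hv) (hu m)).symm
  exact hclosed.closure_subset_iff.2 hunion (hdense v)

end Orthogonal

section Hilbert

variable {𝕜 E F : Type*} [RCLike 𝕜] [NormedAddCommGroup E] [InnerProductSpace 𝕜 E]
  [CompleteSpace E] [NormedAddCommGroup F] [NormedSpace 𝕜 F]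

theorem dense_iUnion_sup_span_image_lt {E1 : Submodule 𝕜 E} {w : ℕ → E}
    (hw : (Submodule.span 𝕜 (Set.range w)).topologicalClosure = E1ᗮ) :
    Dense (⋃ m, ((E1 ⊔ Submodule.span 𝕜 (w '' {i | i < m}) : Submodule 𝕜 E) : Set E)) := by
  set X := fun m => E1 ⊔ Submodule.span 𝕜 (w '' {i | i < m})
  have hE1 : E1 ≤ ⨆ m, X m := le_sup_left.trans (le_iSup X 0)
  have hspan : Submodule.span 𝕜 (Set.range w) ≤ ⨆ m, X m := by
    refine Submodule.span_le.2 ?_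
    rintro _ ⟨i, rfl⟩
    exact le_iSup X (i + 1)
      (Submodule.mem_sup_right (Submodule.subset_span ⟨i, Nat.lt_succ_self i, rfl⟩))
  have hperp : (⨆ m, X m)ᗮ = ⊥ := by
    refine eq_bot_iff.2 ((le_inf (Submodule.orthogonal_le hE1) ?_).trans
      E1ᗮ.inf_orthogonal_eq_bot.le)
    rw [← hw, Submodule.orthogonal_closure]
    exact Submodule.orthogonal_le hspan
  rw [dense_iff_closure_eq, ← Submodule.coe_iSup_of_directed X
    (monotone_sup_span_image_lt E1 w).directed_le, ← Submodule.topologicalClosure_coe,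
    Submodule.topologicalClosure_eq_top_iff.2 hperp, Submodule.top_coe]

theorem IsCompactOperator.tendsto_opNorm_comp_subtypeL_orthogonal {T : E →L[𝕜] F}
    (hT : IsCompactOperator T) {X : ℕ → Submodule 𝕜 E} (hX : Monotone X)
    (hdense : Dense (⋃ m, (X m : Set E))) :
    Tendsto (fun m => ‖T.comp (X m)ᗮ.subtypeL‖) atTop (𝓝 0) := by
  have hnear : ∀ m : ℕ, ∃ u ∈ (X m)ᗮ, ‖u‖ ≤ 1 ∧
      ‖T.comp (X m)ᗮ.subtypeL‖ ≤ ‖T u‖ + 1 / (m + 1) := by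
    intro m
    obtain ⟨x, hx1, hx⟩ := (T.comp (X m)ᗮ.subtypeL).exists_lt_apply_of_lt_opNorm
      (sub_lt_self _ Nat.one_div_pos_of_nat)
    exact ⟨x, x.2, hx1.le, by simpa using hx.le⟩
  choose u hu hu1 hnear using hnear
  have hTu : Tendsto (fun m => T (u m)) atTop (𝓝 0) := by
    refine hT.tendsto_zero_of_forall_dual hu1 fun φ => ?_
    have h := tendsto_inner_zero_of_mem_orthogonal hX hdense hu hu1
      ((InnerProductSpace.toDual 𝕜 E).symm φ)
    simpa [Function.comp_def, InnerProductSpace.toDual_symm_apply] using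
      (RCLike.continuous_conj.tendsto 0).comp h
  refine squeeze_zero (fun m => norm_nonneg _) hnear ?_
  simpa using hTu.norm.add tendsto_one_div_add_atTop_nhds_zero_nat

end Hilbert

theorem stmt_9_general
    (E : Type*) [NormedAddCommGroup E] [InnerProductSpace ℝ E] [CompleteSpace E]
    (L : Type*) [NormedAddCommGroup L] [NormedSpace ℝ L]
    (ι : E →L[ℝ] L) (hι : IsCompactOperator ι)
    (E1 : Submodule ℝ E)
    (w : ℕ → E)
    (hdense : (Submodule.span ℝ (Set.range w)).topologicalClosure = E1ᗮ)
    (X : ℕ → Submodule ℝ E)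
    (hX : ∀ m, X m = E1 ⊔ Submodule.span ℝ (w '' {i | i < m}))
    (η : ℕ → ℝ)
    (hη : ∀ m, η m = sSup ((fun u : E => ‖ι u‖ / ‖u‖) '' {u : E | u ∈ (X m)ᗮ ∧ u ≠ 0})) :
    Antitone η ∧ Tendsto η atTop (nhds 0) := by
  obtain rfl : η = fun m => ‖ι.comp (X m)ᗮ.subtypeL‖ :=
    funext fun m => (hη m).trans (ι.sSup_image_norm_div_norm_eq_opNorm_comp_subtypeL _)
  obtain rfl : X = fun m => E1 ⊔ Submodule.span ℝ (w '' {i | i < m}) := funext hX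
  have hmono := monotone_sup_span_image_lt E1 w
  exact ⟨fun _ _ hab => ι.opNorm_comp_subtypeL_mono (Submodule.orthogonal_le (hmono hab)),
    hι.tendsto_opNorm_comp_subtypeL_orthogonal hmono (dense_iUnion_sup_span_image_lt hdense)⟩

theorem stmt_9
    (E : Type*) [NormedAddCommGroup E] [InnerProductSpace ℝ E] [CompleteSpace E]
    (L : Type*) [NormedAddCommGroup L] [NormedSpace ℝ L] [CompleteSpace L]
    (ι : E →L[ℝ] L) (hι : IsCompactOperator ι)
    (E1 : Submodule ℝ E) (hE1closed : IsClosed (E1 : Set E))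
    (w : ℕ → E) (hw : Orthonormal ℝ w) (hwmem : ∀ n, w n ∈ E1ᗮ)
    (hdense : (Submodule.span ℝ (Set.range w)).topologicalClosure = E1ᗮ)
    (X : ℕ → Submodule ℝ E)
    (hX : ∀ m, X m = E1 ⊔ Submodule.span ℝ (w '' {i | i < m}))
    (η : ℕ → ℝ)
    (hη : ∀ m, η m = sSup ((fun u : E => ‖ι u‖ / ‖u‖) '' {u : E | u ∈ (X m)ᗮ ∧ u ≠ 0})) :
    Antitone η ∧ Tendsto η atTop (nhds 0) :=
  stmt_9_general E L ι hι E1 w hdense X hX η hη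
end

section
/- Let f be a C¹ functional on a Hilbert space E of the form f(u) = (1/2)(‖u⁺‖² − ‖u⁻‖²) − ∫_ℝ R(t,u)dt, where R satisfies R'(t,x)·x − 2R(t,x) ≥ b|x|^β for |x| ≥ r (b, r > 0, β > 1). If (u_n) ⊆ E satisfies 0 ≤ f(u_n) ≤ C and f'(u_n)·u_n → 0 with ‖u_n‖ → ∞, then ‖u_n‖^{−1} ∫_{\{|u_n(t)|≥r\}} |u_n|^β dt → 0 as n → ∞. -/
/-!
On the set where `|uₙ| ≥ r` the integrand `R'(t,uₙ)·uₙ − 2R(t,uₙ)` dominates `b|uₙ|^β`, and it is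
nonnegative elsewhere, so `b ∫_{|uₙ|≥r} |uₙ|^β ≤ 2f(uₙ) − f'(uₙ)·uₙ ≤ 2C − f'(uₙ)·uₙ`. The right-hand
side is bounded because `f'(uₙ)·uₙ → 0`, and a bounded sequence divided by `‖uₙ‖ → ∞` tends to `0`.
-/

open MeasureTheory Filter

theorem setIntegral_le_integral_of_le_on {α : Type*} [MeasurableSpace α] {μ : Measure α}
    {f g : α → ℝ} {s : Set α} (hs : NullMeasurableSet s μ) (hg : Integrable g μ)
    (hg₀ : 0 ≤ᵐ[μ] g) (hf₀ : ∀ x ∈ s, 0 ≤ f x) (hfg : ∀ x ∈ s, f x ≤ g x) :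
    ∫ x in s, f x ∂μ ≤ ∫ x, g x ∂μ :=
  calc ∫ x in s, f x ∂μ
      ≤ ∫ x in s, g x ∂μ :=
        integral_mono_of_nonneg ((ae_restrict_mem₀ hs).mono hf₀) hg.restrict
          ((ae_restrict_mem₀ hs).mono hfg)
    _ ≤ ∫ x, g x ∂μ := setIntegral_le_integral hg hg₀

theorem mul_setIntegral_rpow_norm_le_integral {α F : Type*} [MeasurableSpace α] {μ : Measure α}
    [NormedAddCommGroup F] {v : α → F} {Φ : α → F → ℝ} {b r β : ℝ} (hb : 0 ≤ b)
    (hv : AEStronglyMeasurable v μ) (hΦ : Integrable (fun t => Φ t (v t)) μ)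
    (hΦ₀ : ∀ t x, 0 ≤ Φ t x) (hΦlow : ∀ t x, r ≤ ‖x‖ → b * ‖x‖ ^ β ≤ Φ t x) :
    b * ∫ t in {t | r ≤ ‖v t‖}, ‖v t‖ ^ β ∂μ ≤ ∫ t, Φ t (v t) ∂μ := by
  have hs : NullMeasurableSet {t | r ≤ ‖v t‖} μ :=
    hv.norm.aemeasurable.nullMeasurable measurableSet_Ici
  rw [← integral_const_mul]
  exact setIntegral_le_integral_of_le_on hs hΦ (ae_of_all _ fun t => hΦ₀ t _)
    (fun t _ => mul_nonneg hb (Real.rpow_nonneg (norm_nonneg _) β))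
    (fun t ht => hΦlow t _ ht)

theorem stmt_16_general (N : ℕ)
    (E : Type*) [NormedAddCommGroup E] [InnerProductSpace ℝ E]
    (ι : E →ₗ[ℝ] (ℝ → EuclideanSpace ℝ (Fin (2 * N))))
    (R : ℝ → EuclideanSpace ℝ (Fin (2 * N)) → ℝ)
    (R' : ℝ → EuclideanSpace ℝ (Fin (2 * N)) → EuclideanSpace ℝ (Fin (2 * N)))
    (b r β C : ℝ) (hb : 0 < b)
    (hRlow : ∀ (t : ℝ) (x : EuclideanSpace ℝ (Fin (2 * N))),
      r ≤ ‖x‖ → b * ‖x‖ ^ β ≤ (inner ℝ (R' t x) x : ℝ) - 2 * R t x)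
    (hRnonneg : ∀ (t : ℝ) (x : EuclideanSpace ℝ (Fin (2 * N))),
      0 ≤ (inner ℝ (R' t x) x : ℝ) - 2 * R t x)
    (f : E → ℝ) (df : E → E →L[ℝ] ℝ)
    -- 2 f(uₙ) − f'(uₙ)·uₙ = ∫ [R'(t,uₙ)·uₙ − 2R(t,uₙ)] dt:
    (u : ℕ → E)
    (hident : ∀ n, 2 * f (u n) - df (u n) (u n)
      = ∫ t : ℝ, ((inner ℝ (R' t (ι (u n) t)) (ι (u n) t) : ℝ) - 2 * R t (ι (u n) t)))
    (hintegrable : ∀ n, Integrable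
      (fun t : ℝ => (inner ℝ (R' t (ι (u n) t)) (ι (u n) t) : ℝ) - 2 * R t (ι (u n) t)) volume)
    (hmeas : ∀ n, AEStronglyMeasurable (ι (u n)) volume)
    (hfbd : ∀ n, 0 ≤ f (u n) ∧ f (u n) ≤ C)
    (hdfu : Tendsto (fun n => df (u n) (u n)) atTop (nhds 0))
    (hnorm : Tendsto (fun n => ‖u n‖) atTop atTop) :
    Tendsto (fun n => (‖u n‖)⁻¹ * ∫ t in {t : ℝ | r ≤ ‖ι (u n) t‖}, ‖ι (u n) t‖ ^ β)
      atTop (nhds 0) := by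
  set I : ℕ → ℝ := fun n => ∫ t in {t : ℝ | r ≤ ‖ι (u n) t‖}, ‖ι (u n) t‖ ^ β
  have hI : ∀ n, b * I n ≤ 2 * f (u n) - df (u n) (u n) := fun n =>
    hident n ▸ mul_setIntegral_rpow_norm_le_integral hb.le (hmeas n) (hintegrable n)
      hRnonneg hRlow
  have hdf_gt : ∀ᶠ n in atTop, -1 < df (u n) (u n) := hdfu.eventually (lt_mem_nhds (by norm_num))
  have hI_bdd : IsBoundedUnder (· ≤ ·) atTop fun n => ‖I n‖ := by
    refine isBoundedUnder_of_eventually_le (a := (2 * C + 1) / b) ?_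
    filter_upwards [hdf_gt] with n hn
    rw [Real.norm_of_nonneg (integral_nonneg fun t => Real.rpow_nonneg (norm_nonneg _) β),
      le_div_iff₀ hb]
    linarith [hI n, (hfbd n).2]
  exact (tendsto_inv_atTop_zero.comp hnorm).zero_mul_isBoundedUnder_le hI_bdd

theorem stmt_16 (N : ℕ)
    (E : Type*) [NormedAddCommGroup E] [InnerProductSpace ℝ E] [CompleteSpace E]
    (ι : E →ₗ[ℝ] (ℝ → EuclideanSpace ℝ (Fin (2 * N))))
    (R : ℝ → EuclideanSpace ℝ (Fin (2 * N)) → ℝ)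
    (R' : ℝ → EuclideanSpace ℝ (Fin (2 * N)) → EuclideanSpace ℝ (Fin (2 * N)))
    (b r β C : ℝ) (hb : 0 < b) (hr : 0 < r) (hβ : 1 < β)
    (hRlow : ∀ (t : ℝ) (x : EuclideanSpace ℝ (Fin (2 * N))),
      r ≤ ‖x‖ → b * ‖x‖ ^ β ≤ (inner ℝ (R' t x) x : ℝ) - 2 * R t x)
    (hRnonneg : ∀ (t : ℝ) (x : EuclideanSpace ℝ (Fin (2 * N))),
      0 ≤ (inner ℝ (R' t x) x : ℝ) - 2 * R t x)
    -- f(u) = ½(‖u⁺‖² − ‖u⁻‖²) − ∫ R(t,u), with orthogonal projections Pp, Pm: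
    (Pp Pm : E →ₗ[ℝ] E) (f : E → ℝ) (df : E → E →L[ℝ] ℝ)
    (hf : ∀ u : E, f u = 1 / 2 * (‖Pp u‖ ^ 2 - ‖Pm u‖ ^ 2) - ∫ t : ℝ, R t (ι u t))
    (hdf : ∀ u : E, HasFDerivAt f (df u) u)
    -- 2 f(uₙ) − f'(uₙ)·uₙ = ∫ [R'(t,uₙ)·uₙ − 2R(t,uₙ)] dt:
    (u : ℕ → E)
    (hident : ∀ n, 2 * f (u n) - df (u n) (u n)
      = ∫ t : ℝ, ((inner ℝ (R' t (ι (u n) t)) (ι (u n) t) : ℝ) - 2 * R t (ι (u n) t)))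
    (hintegrable : ∀ n, Integrable
      (fun t : ℝ => (inner ℝ (R' t (ι (u n) t)) (ι (u n) t) : ℝ) - 2 * R t (ι (u n) t)) volume)
    (hmeas : ∀ n, AEStronglyMeasurable (ι (u n)) volume)
    (hfbd : ∀ n, 0 ≤ f (u n) ∧ f (u n) ≤ C)
    (hdfu : Tendsto (fun n => df (u n) (u n)) atTop (nhds 0))
    (hnorm : Tendsto (fun n => ‖u n‖) atTop atTop) :
    Tendsto (fun n => (‖u n‖)⁻¹ * ∫ t in {t : ℝ | r ≤ ‖ι (u n) t‖}, ‖ι (u n) t‖ ^ β)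
      atTop (nhds 0) :=
  stmt_16_general N E ι R R' b r β C hb hRlow hRnonneg f df u hident hintegrable hmeas hfbd hdfu
    hnorm
end
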